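/- arXiv:2307.08979 — 3 statements merged into one kernel-verified Lean document; each statement's English description precedes it below -/
import Mathlib

section
/- Let OPT be a finite set of bidders, each unhappy bidder in a round contributing an increase of at least ε to one of two monotone potentials Π₁, Π₂, each bounded in [0, |OPT|]. Then the number of rounds in which at least ε·|OPT| bidders of OPT are unhappy is at most 2/ε². -/
theorem stmt_6 (ε : ℝ) (hε : 0 < ε ∧ ε < 1) (n : ℕ) (hn : 0 < n)
    (Pi₁ Pi₂ : ℕ → ℝ) (hmono₁ : Monotone Pi₁) (hmono₂ : Monotone Pi₂)
    (hb₁ : ∀ t, 0 ≤ Pi₁ t ∧ Pi₁ t ≤ (n : ℝ)) (hb₂ : ∀ t, 0 ≤ Pi₂ t ∧ Pi₂ t ≤ (n : ℝ))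
    (unhappy : ℕ → ℕ)
    (hinc : ∀ t, Pi₁ (t + 1) + Pi₂ (t + 1) ≥ Pi₁ t + Pi₂ t + ε * unhappy t)
    (B : Finset ℕ) (hB : ∀ t ∈ B, ε * (n : ℝ) ≤ (unhappy t : ℝ)) :
    (B.card : ℝ) ≤ 2 / ε ^ 2 := by
  obtain ⟨hε0, hε1⟩ := hε
  set f : ℕ → ℝ := fun t => Pi₁ t + Pi₂ t with hf
  have hstep : ∀ t, 0 ≤ f (t + 1) - f t := by
    intro t
    have := hinc t
    have hu : (0:ℝ) ≤ ε * unhappy t := by positivity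
    simp only [hf]; linarith
  set T := B.sup id + 1 with hT
  have hsub : B ⊆ Finset.range T := by
    intro t ht
    exact Finset.mem_range.mpr (Nat.lt_succ_of_le (Finset.le_sup (f := id) ht))
  have key : (B.card : ℝ) * (ε ^ 2 * n) ≤ f T - f 0 := by
    calc (B.card : ℝ) * (ε ^ 2 * n) = ∑ t ∈ B, ε ^ 2 * n := by
          rw [Finset.sum_const, nsmul_eq_mul]
      _ ≤ ∑ t ∈ B, (f (t + 1) - f t) := by
          apply Finset.sum_le_sum
          intro t ht
          have h1 := hB t ht
          have h2 := hinc t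
          have : ε * (ε * n) ≤ ε * unhappy t :=
            mul_le_mul_of_nonneg_left h1 hε0.le
          simp only [hf]
          nlinarith
      _ ≤ ∑ t ∈ Finset.range T, (f (t + 1) - f t) :=
          Finset.sum_le_sum_of_subset_of_nonneg hsub (fun t _ _ => hstep t)
      _ = f T - f 0 := Finset.sum_range_sub f T
  have hbound : f T - f 0 ≤ 2 * n := by
    have h1 := hb₁ T; have h2 := hb₂ T; have h3 := hb₁ 0; have h4 := hb₂ 0
    simp only [hf]; linarith [h1.2, h2.2, h3.1, h4.1]
  have hn' : (0:ℝ) < n := by exact_mod_cast hn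
  have hpos : 0 < ε ^ 2 * n := by positivity

  have : (B.card : ℝ) * (ε ^ 2 * n) ≤ 2 * n := le_trans key hbound
  rw [show (2:ℝ) / ε ^ 2 = (2 * n) / (ε ^ 2 * n) by field_simp]
  exact (le_div_iff₀ hpos).mpr this
end

section
/- Let L, R be finite sets, M a matching between L and R, OPT a matching between L and R, p : R → [0,1] prices, u : L → ℝ utilities, and Happy ⊆ L. Assume: (i) Σ_{i∈L} u(i) ≤ |M| − Σ_{j∈R} p(j); (ii) for every i ∈ Happy matched in OPT to item o(i), u(i) ≥ 1 − p(o(i)) − ε; (iii) every item with p(j) > 0 is matched in M; (iv) the number of bidders matched in OPT that lie in Happy is at least (1−ε)·|OPT|; (v) u(i) ≥ 0 for all i. Then |M| ≥ (1−2ε)·|OPT|. -/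
theorem stmt_7 {α β : Type*} [DecidableEq α] [DecidableEq β]
    (ε : ℝ) (hε : 0 < ε ∧ ε < 1)
    (L : Finset α) (R : Finset β)
    (M : Finset (α × β)) (hM : M ⊆ L ×ˢ R)
    (hMmatch : ∀ e ∈ M, ∀ e' ∈ M, (e.1 = e'.1 ∨ e.2 = e'.2) → e = e')
    (OPT : Finset α) (hOPT : OPT ⊆ L) (o : α → β) (ho : ∀ i ∈ OPT, o i ∈ R)
    (hoinj : Set.InjOn o OPT)
    (p : β → ℝ) (hp : ∀ j, 0 ≤ p j ∧ p j ≤ 1)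
    (u : α → ℝ) (hu : ∀ i, 0 ≤ u i)
    (Happy : Finset α) (hHappy : Happy ⊆ L)
    (h_i : ∑ i ∈ L, u i ≤ (M.card : ℝ) - ∑ j ∈ R, p j)
    (h_ii : ∀ i ∈ OPT ∩ Happy, u i ≥ 1 - p (o i) - ε)
    (h_iii : ∀ j ∈ R, 0 < p j → ∃ i, (i, j) ∈ M)
    (h_iv : ((OPT ∩ Happy).card : ℝ) ≥ (1 - ε) * OPT.card) :
    (M.card : ℝ) ≥ (1 - 2 * ε) * OPT.card := by
  set S := OPT ∩ Happy with hS
  have hSsubL : S ⊆ L := fun i hi => hOPT (Finset.mem_of_mem_inter_left hi)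
  -- sum of u over S ≤ sum over L
  have h1 : ∑ i ∈ S, u i ≤ ∑ i ∈ L, u i :=
    Finset.sum_le_sum_of_subset_of_nonneg hSsubL (fun i _ _ => hu i)
  -- sum of p ∘ o over S ≤ sum of p over R
  have hinjS : Set.InjOn o S := hoinj.mono (by
    intro x hx
    exact Finset.mem_of_mem_inter_left hx)
  have h2 : ∑ i ∈ S, p (o i) ≤ ∑ j ∈ R, p j := by
    rw [← Finset.sum_image (fun x hx y hy h => hinjS hx hy h)]
    refine Finset.sum_le_sum_of_subset_of_nonneg ?_ (fun j _ _ => (hp j).1)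
    intro j hj
    obtain ⟨i, hi, rfl⟩ := Finset.mem_image.mp hj
    exact ho i (Finset.mem_of_mem_inter_left hi)
  -- lower bound on sum of u over S
  have h3 : (S.card : ℝ) * (1 - ε) - ∑ i ∈ S, p (o i) ≤ ∑ i ∈ S, u i := by
    have := Finset.sum_le_sum (fun i hi => h_ii i hi)
    simp only [Finset.sum_sub_distrib, Finset.sum_const, nsmul_eq_mul, mul_one] at this
    calc (S.card : ℝ) * (1 - ε) - ∑ i ∈ S, p (o i)
        = ∑ i ∈ S, (1 - p (o i) - ε) := by
          rw [Finset.sum_sub_distrib, Finset.sum_sub_distrib]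
          simp [mul_sub]
          ring
      _ ≤ ∑ i ∈ S, u i := Finset.sum_le_sum (fun i hi => h_ii i hi)
  have hM1 : (S.card : ℝ) * (1 - ε) ≤ (M.card : ℝ) := by
    have := h3.trans (h1.trans h_i)
    linarith
  have hεpos := hε.1
  have hε1 := hε.2
  have hSO : (S.card : ℝ) * (1 - ε) ≥ (1 - ε) * ((1 - ε) * OPT.card) := by
    have : (0:ℝ) ≤ 1 - ε := by linarith
    nlinarith
  have hOnn : (0:ℝ) ≤ OPT.card := Nat.cast_nonneg _
  nlinarith [mul_nonneg (mul_pos hεpos hεpos).le hOnn]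
end

section
/- In the weighted auction algorithm, the item-price potential Φ_items = Σ_{j∈R} p_j is always at most W_OPT, the weight of a maximum weight matching: formally, if every matched pair (i, a_i) satisfies v_i(a_i) > p'_{a_i} where p'_{a_i} is a_i's price just before its last assignment, all positive-price items are matched, and prices are nondecreasing, then Σ_j p_j ≤ W_OPT. -/
theorem stmt_13 {α β : Type*} [DecidableEq α] [DecidableEq β]
    (L : Finset α) (R : Finset β) (v : α → β → ℝ) (hv : ∀ i j, 0 ≤ v i j)
    (WOPT : ℝ)
    (hWOPT : ∀ M' : Finset (α × β), M' ⊆ L ×ˢ R →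
      (∀ e ∈ M', ∀ e' ∈ M', (e.1 = e'.1 ∨ e.2 = e'.2) → e = e') →
      ∑ e ∈ M', v e.1 e.2 ≤ WOPT)
    (M : Finset (α × β)) (hMsub : M ⊆ L ×ˢ R)
    (hMmatch : ∀ e ∈ M, ∀ e' ∈ M, (e.1 = e'.1 ∨ e.2 = e'.2) → e = e')
    (p p' : β → ℝ) (hp0 : ∀ j, 0 ≤ p j)
    (hval : ∀ e ∈ M, p' e.2 < v e.1 e.2)
    (hpos : ∀ j ∈ R, 0 < p j → ∃ i, (i, j) ∈ M)
    (hlast : ∀ e ∈ M, p e.2 ≤ p' e.2) :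
    ∑ j ∈ R, p j ≤ WOPT := by
  calc ∑ j ∈ R, p j = ∑ j ∈ M.image Prod.snd, p j := by
        refine (Finset.sum_subset ?_ ?_).symm
        · intro j hj
          obtain ⟨e, he, rfl⟩ := Finset.mem_image.mp hj
          exact (Finset.mem_product.mp (hMsub he)).2
        · intro j hj hj'
          by_contra h
          obtain ⟨i, hi⟩ := hpos j hj (lt_of_le_of_ne (hp0 j) (Ne.symm h))
          exact hj' (Finset.mem_image.mpr ⟨(i, j), hi, rfl⟩)
    _ = ∑ e ∈ M, p e.2 :=
        (Finset.sum_image fun e he e' he' h => hMmatch e he e' he' (Or.inr h))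
    _ ≤ ∑ e ∈ M, v e.1 e.2 :=
        Finset.sum_le_sum fun e he => le_of_lt (lt_of_le_of_lt (hlast e he) (hval e he))
    _ ≤ WOPT := hWOPT M hMsub hMmatch
end
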